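/- Let w : ℝ → ℝ be twice continuously differentiable with bounded second derivative, and define V(μ) = ∫∫ w(y−z) dμ(y) dμ(z) on P₂(ℝ). Then V is invariant by translations (V(μ ∘ τ_y^{−1}) = V(μ) for all y ∈ ℝ), its Lions derivative is ∂_μV(μ)(y) = ∫ ∇w(y−z) dμ(z) − ∫ ∇w(z−y) dμ(z), and for every random variable X with law μ one has E[∂_μV(μ)(X)] = 0. -/

import Mathlib

open MeasureTheory Filter Topology

/-- The interaction potential `V(μ) = ∫∫ w(y−z) dμ(y) dμ(z)`. -/
noncomputable def interactionPotential (w : ℝ → ℝ) (μ : Measure ℝ) : ℝ :=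
  ∫ y, ∫ z, w (y - z) ∂μ ∂μ

/-- The candidate Lions derivative
`∂_μV(μ)(y) = ∫ ∇w(y−z) dμ(z) − ∫ ∇w(z−y) dμ(z)`. -/
noncomputable def interactionDerivative (w : ℝ → ℝ) (μ : Measure ℝ) (y : ℝ) : ℝ :=
  (∫ z, deriv w (y - z) ∂μ) - ∫ z, deriv w (z - y) ∂μ

private lemma aux_abs_sub (a b : ℝ) : |a - b| ≤ |a| + |b| := by
  calc |a - b| = |a + -b| := by ring_nf
    _ ≤ |a| + |-b| := abs_add_le _ _
    _ = |a| + |b| := by rw [abs_neg]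

private lemma aux_mp_fst {α : Type*} [MeasurableSpace α] (P : Measure α)
    [IsProbabilityMeasure P] : MeasurePreserving Prod.fst (P.prod P) P :=
  ⟨measurable_fst, by simp⟩

private lemma aux_mp_snd {α : Type*} [MeasurableSpace α] (P : Measure α)
    [IsProbabilityMeasure P] : MeasurePreserving Prod.snd (P.prod P) P :=
  ⟨measurable_snd, by simp⟩

private lemma aux_integrable_mul {α : Type*} [MeasurableSpace α] {ν : Measure α}
    {f h : α → ℝ} (hf : MemLp f 2 ν) (hh : MemLp h 2 ν) :
    Integrable (fun x => f x * h x) ν := by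
  have h1 : (1 : ENNReal) / 1 = 1 / 2 + 1 / 2 := by
    rw [ENNReal.div_add_div_same, one_add_one_eq_two,
      ENNReal.div_self two_ne_zero ENNReal.ofNat_ne_top, div_one]
  have hm : MemLp (h • f) 1 ν := hf.smul (hpqr := ⟨by rw [← one_div, ← one_div]; exact h1.symm⟩) hh
  rw [memLp_one_iff_integrable] at hm
  exact hm.congr (by filter_upwards with x; simp [mul_comm])

private lemma aux_memL2_abs {α : Type*} [MeasurableSpace α] {ν : Measure α}
    {u : α → ℝ} (hu : MemLp u 2 ν) : MemLp (fun x => |u x|) 2 ν := by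
  simpa [Real.norm_eq_abs] using hu.norm

private lemma aux_memL2_comp {α : Type*} [MeasurableSpace α] {ν : Measure α}
    [IsFiniteMeasure ν] {g : ℝ → ℝ} {c1 Cw : ℝ}
    (hgc : Continuous g) (hgr : ∀ x, |g x| ≤ c1 + Cw * |x|) (hc1 : 0 ≤ c1) (hCw : 0 ≤ Cw)
    {u : α → ℝ} (hu : Measurable u) (hu2 : MemLp u 2 ν) :
    MemLp (fun x => g (u x)) 2 ν := by
  have hbig : MemLp (fun x => c1 + Cw * |u x|) 2 ν := by
    have h1 : MemLp (fun _ : α => c1) 2 ν := memLp_const c1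
    have h2 : MemLp (fun x => Cw * |u x|) 2 ν := (aux_memL2_abs hu2).const_mul Cw
    exact h1.add h2
  refine hbig.of_le (hgc.measurable.comp hu).aestronglyMeasurable ?_
  filter_upwards with x
  have h0 : 0 ≤ c1 + Cw * |u x| := by positivity
  simp only [Real.norm_eq_abs]
  rw [abs_of_nonneg h0]
  exact hgr (u x)

private lemma aux_integrable_quad {α : Type*} [MeasurableSpace α] {ν : Measure α}
    [IsProbabilityMeasure ν] {w : ℝ → ℝ} {A B : ℝ}
    (hwc : Continuous w) (hgr : ∀ x, |w x| ≤ A + B * x ^ 2)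
    {u : α → ℝ} (hu : Measurable u) (hu2 : MemLp u 2 ν) :
    Integrable (fun x => w (u x)) ν := by
  have hsq : Integrable (fun x => A + B * u x ^ 2) ν :=
    (integrable_const A).add (hu2.integrable_sq.const_mul B)
  refine hsq.mono (hwc.measurable.comp hu).aestronglyMeasurable ?_
  filter_upwards with x
  simp only [Real.norm_eq_abs]
  exact (hgr (u x)).trans (le_abs_self _)

/-- **Translation invariance and the Lions derivative of an interaction potential.**
Let `w : ℝ → ℝ` be `C²` with bounded second derivative and
`V(μ) = ∫∫ w(y−z) dμ(y) dμ(z)` on `P₂(ℝ)`. Then: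
(a) `V` is invariant by translations;
(b) the Lions derivative of `V` at `μ` is
    `∂_μV(μ)(y) = ∫ ∇w(y−z) dμ(z) − ∫ ∇w(z−y) dμ(z)`, in the sense that for any
    random variables `X, H ∈ L²` on a probability space with `Law(X) = μ`, the lift
    `t ↦ V(Law(X + tH))` is differentiable at `0` with derivative
    `E[∂_μV(μ)(X) · H]`;
(c) `E[∂_μV(μ)(X)] = 0` for every random variable `X` with law `μ`, i.e.
    `∫ ∂_μV(μ)(y) dμ(y) = 0`. -/
theorem interactionPotential_translation_invariant_derivative
    (w : ℝ → ℝ) (hw : ContDiff ℝ 2 w)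
    (Cw : ℝ) (hw2 : ∀ x, |deriv (deriv w) x| ≤ Cw)
    (μ : Measure ℝ) [IsProbabilityMeasure μ]
    (hμ2 : MemLp (fun y : ℝ => y) 2 μ) :
    (∀ y : ℝ,
      interactionPotential w (μ.map (fun z => z + y)) = interactionPotential w μ) ∧
    (∀ (Ω : Type) [MeasurableSpace Ω] (P : Measure Ω), IsProbabilityMeasure P →
      ∀ X H : Ω → ℝ, Measurable X → Measurable H →
        MemLp X 2 P → MemLp H 2 P → P.map X = μ →
        HasDerivAt
          (fun t : ℝ =>
            interactionPotential w (P.map fun ω => X ω + t * H ω))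
          (∫ ω, interactionDerivative w μ (X ω) * H ω ∂P) 0) ∧
    (∫ y, interactionDerivative w μ y ∂μ) = 0 := by
  have hCw : 0 ≤ Cw := le_trans (abs_nonneg _) (hw2 0)
  have hwc : Continuous w := hw.continuous
  have hgC : ContDiff ℝ 1 (deriv w) := by
    have h2 : ContDiff ℝ ((1 : WithTop ℕ∞) + 1) w := by
      have he : ((1 : WithTop ℕ∞) + 1) = 2 := by norm_num
      rw [he]; exact hw
    exact (contDiff_succ_iff_deriv.mp h2).2.2
  have hgd : Differentiable ℝ (deriv w) := hgC.differentiable one_ne_zero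
  have hgc : Continuous (deriv w) := hgd.continuous
  have hwd : Differentiable ℝ w := hw.differentiable (by norm_num)
  set c1 : ℝ := |deriv w 0| with hc1def
  have hc1 : 0 ≤ c1 := abs_nonneg _
  -- linear growth of `deriv w`
  have hg_growth : ∀ x : ℝ, |deriv w x| ≤ c1 + Cw * |x| := by
    intro x
    have key : ‖deriv w x - deriv w 0‖ ≤ Cw * ‖x - 0‖ :=
      convex_univ.norm_image_sub_le_of_norm_deriv_le
        (fun y _ => hgd y) (fun y _ => by simpa [Real.norm_eq_abs] using hw2 y)
        (Set.mem_univ 0) (Set.mem_univ x)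
    simp only [Real.norm_eq_abs, sub_zero] at key
    have h1 : |deriv w x| - |deriv w 0| ≤ |deriv w x - deriv w 0| :=
      abs_sub_abs_le_abs_sub _ _
    rw [hc1def]; linarith
  -- quadratic growth of `w`
  have hw_growth : ∀ x : ℝ, |w x| ≤ (|w 0| + c1) + (c1 + Cw) * x ^ 2 := by
    intro x
    have key : ‖w x - w 0‖ ≤ (c1 + Cw * |x|) * ‖x - 0‖ := by
      refine (convex_closedBall (0:ℝ) |x|).norm_image_sub_le_of_norm_deriv_le
        (fun y _ => hwd y) (fun y hy => ?_) ?_ ?_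
      · have hy' : |y| ≤ |x| := by
          simpa [Real.dist_eq] using Metric.mem_closedBall.mp hy
        have := hg_growth y
        simp only [Real.norm_eq_abs]
        nlinarith
      · simp [Metric.mem_closedBall, Real.dist_eq, abs_nonneg]
      · simp [Metric.mem_closedBall, Real.dist_eq]
    simp only [Real.norm_eq_abs, sub_zero] at key
    have h1 : |x| ≤ 1 + x ^ 2 := by nlinarith [sq_nonneg (|x| - 1), sq_abs x]
    have h2 : |w x| - |w 0| ≤ |w x - w 0| := abs_sub_abs_le_abs_sub _ _
    nlinarith [sq_abs x, abs_nonneg x, mul_le_mul_of_nonneg_left h1 hc1, sq_nonneg x]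
  refine ⟨?_, ?_, ?_⟩
  · -- (a) translation invariance
    intro y
    have hty : Measurable fun z : ℝ => z + y := measurable_id.add_const y
    have hinner : ∀ a : ℝ,
        ∫ z, w (a - z) ∂(μ.map fun z => z + y) = ∫ b, w (a - (b + y)) ∂μ := fun a =>
      integral_map hty.aemeasurable
        ((hwc.comp (continuous_const.sub continuous_id)).aestronglyMeasurable)
    have houter : StronglyMeasurable fun a : ℝ => ∫ b, w (a - (b + y)) ∂μ := by
      apply StronglyMeasurable.integral_prod_right
        (f := fun (a : ℝ) (b : ℝ) => w (a - (b + y)))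
      exact (hwc.measurable.comp
        (measurable_fst.sub (measurable_snd.add_const y))).stronglyMeasurable
    simp only [interactionPotential]
    calc ∫ a, ∫ z, w (a - z) ∂(μ.map fun z => z + y) ∂(μ.map fun z => z + y)
        = ∫ a, ∫ b, w (a - (b + y)) ∂μ ∂(μ.map fun z => z + y) :=
          integral_congr_ae (Eventually.of_forall hinner)
      _ = ∫ a, ∫ b, w ((a + y) - (b + y)) ∂μ ∂μ :=
          integral_map hty.aemeasurable houter.aestronglyMeasurable
      _ = ∫ a, ∫ b, w (a - b) ∂μ ∂μ := by
          simp only [add_sub_add_right_eq_sub]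
  · -- (b) the Lions derivative
    intro Ω _ P hP X H hX hH hX2 hH2 hmap
    haveI := hP
    set Q : Measure (Ω × Ω) := P.prod P with hQdef
    haveI : IsProbabilityMeasure Q := by
      rw [hQdef]; infer_instance
    have hX1m : Measurable fun p : Ω × Ω => X p.1 := hX.comp measurable_fst
    have hX2m : Measurable fun p : Ω × Ω => X p.2 := hX.comp measurable_snd
    have hH1m : Measurable fun p : Ω × Ω => H p.1 := hH.comp measurable_fst
    have hH2m : Measurable fun p : Ω × Ω => H p.2 := hH.comp measurable_snd
    have hX1 : MemLp (fun p : Ω × Ω => X p.1) 2 Q :=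
      hX2.comp_measurePreserving (aux_mp_fst P)
    have hX2' : MemLp (fun p : Ω × Ω => X p.2) 2 Q :=
      hX2.comp_measurePreserving (aux_mp_snd P)
    have hH1 : MemLp (fun p : Ω × Ω => H p.1) 2 Q :=
      hH2.comp_measurePreserving (aux_mp_fst P)
    have hH2' : MemLp (fun p : Ω × Ω => H p.2) 2 Q :=
      hH2.comp_measurePreserving (aux_mp_snd P)
    -- integrability of the integrand, for every t
    have hFt_int : ∀ t : ℝ, Integrable
        (fun p : Ω × Ω => w ((X p.1 + t * H p.1) - (X p.2 + t * H p.2))) Q := by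
      intro t
      have hmem : MemLp (fun p : Ω × Ω => (X p.1 + t * H p.1) - (X p.2 + t * H p.2)) 2 Q :=
        (hX1.add (hH1.const_mul t)).sub (hX2'.add (hH2'.const_mul t))
      have hmeas : Measurable fun p : Ω × Ω => (X p.1 + t * H p.1) - (X p.2 + t * H p.2) :=
        (hX1m.add (hH1m.const_mul t)).sub (hX2m.add (hH2m.const_mul t))
      exact aux_integrable_quad hwc hw_growth hmeas hmem
    -- representation of the potential as an integral over the product space
    have key_repr : ∀ t : ℝ,
        interactionPotential w (P.map fun ω => X ω + t * H ω)
          = ∫ p, w ((X p.1 + t * H p.1) - (X p.2 + t * H p.2)) ∂Q := by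
      intro t
      have hft : Measurable fun ω => X ω + t * H ω := hX.add (hH.const_mul t)
      have hinner : ∀ y : ℝ,
          ∫ z, w (y - z) ∂(P.map fun ω => X ω + t * H ω)
            = ∫ ω', w (y - (X ω' + t * H ω')) ∂P := fun y =>
        integral_map hft.aemeasurable
          ((hwc.comp (continuous_const.sub continuous_id)).aestronglyMeasurable)
      have houter : StronglyMeasurable fun y : ℝ => ∫ ω', w (y - (X ω' + t * H ω')) ∂P := by
        apply StronglyMeasurable.integral_prod_right
          (f := fun (y : ℝ) (ω' : Ω) => w (y - (X ω' + t * H ω')))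
        exact (hwc.measurable.comp
          (measurable_fst.sub (hft.comp measurable_snd))).stronglyMeasurable
      simp only [interactionPotential]
      calc ∫ y, ∫ z, w (y - z) ∂(P.map fun ω => X ω + t * H ω)
              ∂(P.map fun ω => X ω + t * H ω)
          = ∫ y, ∫ ω', w (y - (X ω' + t * H ω')) ∂P ∂(P.map fun ω => X ω + t * H ω) :=
            integral_congr_ae (Eventually.of_forall hinner)
        _ = ∫ ω, ∫ ω', w ((X ω + t * H ω) - (X ω' + t * H ω')) ∂P ∂P :=
            integral_map hft.aemeasurable houter.aestronglyMeasurable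
        _ = ∫ p, w ((X p.1 + t * H p.1) - (X p.2 + t * H p.2)) ∂Q :=
            (integral_prod _ (hFt_int t)).symm
    -- the dominated-derivative theorem on the product space
    set bound : Ω × Ω → ℝ := fun p =>
      (c1 + Cw * (|X p.1| + |X p.2| + |H p.1| + |H p.2|)) * (|H p.1| + |H p.2|)
      with hbounddef
    have hSmem : MemLp (fun p : Ω × Ω => c1 + Cw * (|X p.1| + |X p.2| + |H p.1| + |H p.2|)) 2 Q := by
      have h1 : MemLp (fun p : Ω × Ω => |X p.1| + |X p.2| + |H p.1| + |H p.2|) 2 Q :=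
        (((aux_memL2_abs hX1).add (aux_memL2_abs hX2')).add (aux_memL2_abs hH1)).add
          (aux_memL2_abs hH2')
      exact (memLp_const c1).add (h1.const_mul Cw)
    have hTmem : MemLp (fun p : Ω × Ω => |H p.1| + |H p.2|) 2 Q :=
      (aux_memL2_abs hH1).add (aux_memL2_abs hH2')
    have hbound_int : Integrable bound Q := aux_integrable_mul hSmem hTmem
    have main := hasDerivAt_integral_of_dominated_loc_of_deriv_le
      (F := fun (t : ℝ) (p : Ω × Ω) => w ((X p.1 + t * H p.1) - (X p.2 + t * H p.2)))
      (F' := fun (t : ℝ) (p : Ω × Ω) =>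
        deriv w ((X p.1 + t * H p.1) - (X p.2 + t * H p.2)) * (H p.1 - H p.2))
      (μ := Q) (bound := bound) (x₀ := 0) (Metric.ball_mem_nhds (0:ℝ) one_pos)
      (Eventually.of_forall fun t =>
        (hwc.measurable.comp
          ((hX1m.add (hH1m.const_mul t)).sub (hX2m.add (hH2m.const_mul t)))).aestronglyMeasurable)
      (hFt_int 0)
      (((hgc.measurable.comp
          ((hX1m.add (hH1m.const_mul (0:ℝ))).sub
            (hX2m.add (hH2m.const_mul (0:ℝ))))).mul (hH1m.sub hH2m)).aestronglyMeasurable)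
      (Eventually.of_forall fun p => by
        intro t ht
        have hts : |t| ≤ 1 := by
          have := Metric.mem_ball.mp ht
          rw [Real.dist_eq, sub_zero] at this
          exact this.le
        have hs : |(X p.1 + t * H p.1) - (X p.2 + t * H p.2)|
            ≤ |X p.1| + |X p.2| + |H p.1| + |H p.2| := by
          have ha : |X p.1 + t * H p.1| ≤ |X p.1| + |t| * |H p.1| := by
            calc |X p.1 + t * H p.1| ≤ |X p.1| + |t * H p.1| := abs_add_le _ _
              _ = |X p.1| + |t| * |H p.1| := by rw [abs_mul]
          have hb : |X p.2 + t * H p.2| ≤ |X p.2| + |t| * |H p.2| := by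
            calc |X p.2 + t * H p.2| ≤ |X p.2| + |t * H p.2| := abs_add_le _ _
              _ = |X p.2| + |t| * |H p.2| := by rw [abs_mul]
          have hc := aux_abs_sub (X p.1 + t * H p.1) (X p.2 + t * H p.2)
          nlinarith [abs_nonneg (H p.1), abs_nonneg (H p.2), abs_nonneg t]
        have hgs : |deriv w ((X p.1 + t * H p.1) - (X p.2 + t * H p.2))|
            ≤ c1 + Cw * (|X p.1| + |X p.2| + |H p.1| + |H p.2|) := by
          have := hg_growth ((X p.1 + t * H p.1) - (X p.2 + t * H p.2))
          nlinarith
        have hH12 : |H p.1 - H p.2| ≤ |H p.1| + |H p.2| := aux_abs_sub _ _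
        rw [Real.norm_eq_abs, abs_mul, hbounddef]
        exact mul_le_mul hgs hH12 (abs_nonneg _) (by positivity))
      hbound_int
      (Eventually.of_forall fun p => by
        intro t ht
        have hlin : HasDerivAt
            (fun s : ℝ => (X p.1 + s * H p.1) - (X p.2 + s * H p.2)) (H p.1 - H p.2) t := by
          simpa [Pi.sub_def] using
            ((((hasDerivAt_id t).mul_const (H p.1)).const_add (X p.1)).sub
              (((hasDerivAt_id t).mul_const (H p.2)).const_add (X p.2)))
        exact ((hwd _).hasDerivAt.comp t hlin))
    -- identify the derivative
    have hgX : MemLp (fun p : Ω × Ω => deriv w (X p.1 - X p.2)) 2 Q :=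
      aux_memL2_comp hgc hg_growth hc1 hCw (hX1m.sub hX2m) (hX1.sub hX2')
    have hgX' : MemLp (fun p : Ω × Ω => deriv w (X p.2 - X p.1)) 2 Q :=
      aux_memL2_comp hgc hg_growth hc1 hCw (hX2m.sub hX1m) (hX2'.sub hX1)
    have I1int : Integrable (fun p : Ω × Ω => deriv w (X p.1 - X p.2) * H p.1) Q :=
      aux_integrable_mul hgX hH1
    have I2int : Integrable (fun p : Ω × Ω => deriv w (X p.1 - X p.2) * H p.2) Q :=
      aux_integrable_mul hgX hH2'
    have I2'int : Integrable (fun p : Ω × Ω => deriv w (X p.2 - X p.1) * H p.1) Q :=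
      aux_integrable_mul hgX' hH1
    have hint4 : Integrable
        (fun p : Ω × Ω => (deriv w (X p.1 - X p.2) - deriv w (X p.2 - X p.1)) * H p.1) Q :=
      aux_integrable_mul (hgX.sub hgX') hH1
    have step1 : ∫ p, deriv w (X p.1 - X p.2) * (H p.1 - H p.2) ∂Q
        = (∫ p, deriv w (X p.1 - X p.2) * H p.1 ∂Q)
          - ∫ p, deriv w (X p.1 - X p.2) * H p.2 ∂Q := by
      simp_rw [mul_sub]
      exact integral_sub I1int I2int
    have step2 : ∫ p, deriv w (X p.1 - X p.2) * H p.2 ∂Q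
        = ∫ p, deriv w (X p.2 - X p.1) * H p.1 ∂Q := by
      have hsw := integral_prod_swap (μ := P) (ν := P)
        (f := fun p : Ω × Ω => deriv w (X p.1 - X p.2) * H p.2)
      rw [hQdef]
      simpa using hsw.symm
    have step3 : (∫ p, deriv w (X p.1 - X p.2) * H p.1 ∂Q)
        - ∫ p, deriv w (X p.2 - X p.1) * H p.1 ∂Q
        = ∫ p, (deriv w (X p.1 - X p.2) - deriv w (X p.2 - X p.1)) * H p.1 ∂Q := by
      rw [← integral_sub I1int I2'int]
      simp_rw [sub_mul]
    have step5 : ∀ ω : Ω,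
        (∫ ω', (deriv w (X ω - X ω') - deriv w (X ω' - X ω)) ∂P)
          = interactionDerivative w μ (X ω) := by
      intro ω
      have hi1 : Integrable (fun ω' => deriv w (X ω - X ω')) P :=
        (aux_memL2_comp hgc hg_growth hc1 hCw
          (measurable_const.sub hX) ((memLp_const (X ω)).sub hX2)).integrable one_le_two
      have hi2 : Integrable (fun ω' => deriv w (X ω' - X ω)) P :=
        (aux_memL2_comp hgc hg_growth hc1 hCw
          (hX.sub measurable_const) (hX2.sub (memLp_const (X ω)))).integrable one_le_two
      rw [integral_sub hi1 hi2]
      simp only [interactionDerivative]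
      congr 1
      · rw [← hmap]
        exact (integral_map hX.aemeasurable
          ((hgc.comp (continuous_const.sub continuous_id)).aestronglyMeasurable)).symm
      · rw [← hmap]
        exact (integral_map hX.aemeasurable
          ((hgc.comp (continuous_id.sub continuous_const)).aestronglyMeasurable)).symm
    have step4 : ∫ p, (deriv w (X p.1 - X p.2) - deriv w (X p.2 - X p.1)) * H p.1 ∂Q
        = ∫ ω, interactionDerivative w μ (X ω) * H ω ∂P := by
      rw [hQdef] at hint4 ⊢
      rw [integral_prod _ hint4]
      refine integral_congr_ae (Eventually.of_forall fun ω => ?_)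
      show ∫ ω', (deriv w (X ω - X ω') - deriv w (X ω' - X ω)) * H ω ∂P
          = interactionDerivative w μ (X ω) * H ω
      rw [integral_mul_const, step5 ω]
    have hval : ∫ p, deriv w (X p.1 - X p.2) * (H p.1 - H p.2) ∂Q
        = ∫ ω, interactionDerivative w μ (X ω) * H ω ∂P := by
      rw [step1, step2, step3, step4]
    have hEq : (fun t : ℝ => interactionPotential w (P.map fun ω => X ω + t * H ω))
        = fun t : ℝ => ∫ p, w ((X p.1 + t * H p.1) - (X p.2 + t * H p.2)) ∂Q :=
      funext key_repr
    rw [hEq]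
    have hmain := main.2
    refine hmain.congr_deriv ?_
    rw [← hval]
    refine integral_congr_ae (Eventually.of_forall fun p => ?_)
    norm_num
  · -- (c) vanishing mean
    have h1mem : MemLp (fun p : ℝ × ℝ => p.1) 2 (μ.prod μ) :=
      hμ2.comp_measurePreserving (aux_mp_fst μ)
    have h2mem : MemLp (fun p : ℝ × ℝ => p.2) 2 (μ.prod μ) :=
      hμ2.comp_measurePreserving (aux_mp_snd μ)
    have hg1 : Integrable (fun p : ℝ × ℝ => deriv w (p.1 - p.2)) (μ.prod μ) :=
      (aux_memL2_comp hgc hg_growth hc1 hCw (measurable_fst.sub measurable_snd)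
        (h1mem.sub h2mem)).integrable one_le_two
    have hg2 : Integrable (fun p : ℝ × ℝ => deriv w (p.2 - p.1)) (μ.prod μ) :=
      (aux_memL2_comp hgc hg_growth hc1 hCw (measurable_snd.sub measurable_fst)
        (h2mem.sub h1mem)).integrable one_le_two
    have hi1 : Integrable (fun y => ∫ z, deriv w (y - z) ∂μ) μ := hg1.integral_prod_left
    have hi2 : Integrable (fun y => ∫ z, deriv w (z - y) ∂μ) μ := hg2.integral_prod_left
    simp only [interactionDerivative]
    rw [integral_sub hi1 hi2, ← integral_prod _ hg1, ← integral_prod _ hg2, sub_eq_zero]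
    have hsw := integral_prod_swap (μ := μ) (ν := μ)
      (f := fun p : ℝ × ℝ => deriv w (p.1 - p.2))
    simpa using hsw.symm
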